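/- Bound link names in HyperLMNtal graphs are α-convertible: for any graph G and link names X, Y with Y not occurring free in G, νX.G is structurally congruent to νY.(G⟨Y/X⟩). -/

import Mathlib

/-! Substituting `Y` for a link `X` that is not free in `G` gives, up to `≡`, the graph `G`
itself; this and α-conversion are proved together by induction on the size of `G`, since a
substitution may rename a binder, which needs α-conversion of a smaller graph.

If `X` is free in `G`, then `G ≡ νY.(Y ⋈ X, G)` by (E6) and the first fact, so
`νX.G ≡ νY.νX.(X ⋈ Y, G)`, and (E6) under `νX` performs the substitution. If `X` is not free,
`νX.G ≡ G`, and adjoining a fusion `Z ⋈ X` with fresh `Z` makes (E6) applicable, which pins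
`G⟨Y/X⟩` down up to `≡`; the fusion `Z ⋈ Y` is then absorbed under `νY.νZ`. -/

/-- Atom names: either the fusion atom `⋈` or an ordinary constructor name. -/
inductive AName where
  | fuse
  | ctor (s : String)
deriving DecidableEq

/-- HyperLMNtal graphs: `0`, atoms `p(X̄)`, molecules `(G,G)`, hyperlink creation `νX.G`. -/
inductive HLGraph where
  | zero
  | atom (p : AName) (xs : List ℕ)
  | mol (g₁ g₂ : HLGraph)
  | nu (x : ℕ) (g : HLGraph)
deriving DecidableEq

namespace HLGraph

/-- The fusion atom `X ⋈ Y`. -/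
def fuseG (x y : ℕ) : HLGraph := .atom .fuse [x, y]

/-- Free link names. -/
def fn : HLGraph → Finset ℕ
  | .zero => ∅
  | .atom _ xs => xs.toFinset
  | .mol g₁ g₂ => g₁.fn ∪ g₂.fn
  | .nu x g => g.fn.erase x

/-- Capture-avoiding link substitution: `LSubst g x y g'` means `g⟨y/x⟩ = g'`
(all free occurrences of `x` replaced by `y`). -/
inductive LSubst : HLGraph → ℕ → ℕ → HLGraph → Prop where
  | zero : LSubst .zero x y .zero
  | atom : LSubst (.atom p xs) x y (.atom p (xs.map fun z => if z = x then y else z))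
  | mol : LSubst g₁ x y g₁' → LSubst g₂ x y g₂' →
      LSubst (.mol g₁ g₂) x y (.mol g₁' g₂')
  | nuEq : LSubst (.nu x g) x y (.nu x g)
  | nuNe : z ≠ x → z ≠ y → LSubst g x y g' →
      LSubst (.nu z g) x y (.nu z g')
  | nuCap : y ≠ x → w ∉ g.fn → w ≠ y →
      LSubst g y w g₁ → LSubst g₁ x y g₂ →
      LSubst (.nu y g) x y (.nu w g₂)

/-- Structural congruence `≡` generated by (E1)–(E10). -/
inductive Cong : HLGraph → HLGraph → Prop where
  | refl : Cong g g
  | symm : Cong g₁ g₂ → Cong g₂ g₁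
  | trans : Cong g₁ g₂ → Cong g₂ g₃ → Cong g₁ g₃
  | e1 : Cong (.mol .zero g) g
  | e2 : Cong (.mol g₁ g₂) (.mol g₂ g₁)
  | e3 : Cong (.mol g₁ (.mol g₂ g₃)) (.mol (.mol g₁ g₂) g₃)
  | e4 : Cong g₁ g₂ → Cong (.mol g₁ g₃) (.mol g₂ g₃)
  | e5 : Cong g₁ g₂ → Cong (.nu x g₁) (.nu x g₂)
  | e6 : x ∈ g.fn ∨ y ∈ g.fn → LSubst g x y g' →
      Cong (.nu x (.mol (fuseG x y) g)) (.nu x g')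
  | e7 : Cong (.nu x (.nu y (fuseG x y))) .zero
  | e8 : Cong (.nu x .zero) .zero
  | e9 : Cong (.nu x (.nu y g)) (.nu y (.nu x g))
  | e10 : x ∉ g₂.fn → Cong (.nu x (.mol g₁ g₂)) (.mol (.nu x g₁) g₂)

end HLGraph

/-- A rewrite rule `lhs ⊸ rhs`. -/
structure GRule where
  lhs : HLGraph
  rhs : HLGraph

/-- The one-step reduction relation `⇝_P` (rules (R1)–(R4)). -/
inductive Red (P : Set GRule) : HLGraph → HLGraph → Prop where
  | r1 : Red P g₁ g₂ → Red P (.mol g₁ g₃) (.mol g₂ g₃)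
  | r2 : Red P g₁ g₂ → Red P (.nu x g₁) (.nu x g₂)
  | r3 : HLGraph.Cong g₁ g₂ → Red P g₂ g₃ → HLGraph.Cong g₃ g₄ → Red P g₁ g₄
  | r4 : r ∈ P → Red P r.lhs r.rhs

namespace HLGraph

/-- Unlike `sizeOf`, this ignores link names, so it is invariant under substitution. -/
def size : HLGraph → ℕ
  | .zero => 1
  | .atom _ _ => 1
  | .mol g₁ g₂ => g₁.size + g₂.size + 1
  | .nu _ g => g.size + 1

namespace LSubst

variable {g g' : HLGraph} {x y : ℕ}

theorem size_eq (h : LSubst g x y g') : g'.size = g.size := by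
  induction h <;> simp [size, *]

theorem fn_subset (h : LSubst g x y g') : g'.fn ⊆ insert y (g.fn.erase x) := by
  induction h with
  | zero => simp [fn]
  | atom => intro a; simp only [fn, Finset.mem_insert, Finset.mem_erase, List.mem_toFinset,
      List.mem_map]; grind
  | mol _ _ ih₁ ih₂ => intro a; have := @ih₁ a; have := @ih₂ a; simp only [fn] at *; grind
  | nuEq => intro a; simp only [fn]; grind
  | nuNe _ _ _ ih => intro a; have := @ih a; simp only [fn] at *; grind
  | nuCap _ _ _ _ _ ih₁ ih₂ =>
      intro a; have := @ih₂ a; have := @ih₁ a; simp only [fn] at *; grind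

theorem notMem_fn (h : LSubst g x y g') (hxy : x ≠ y) : x ∉ g'.fn := fun hx ↦ by
  simpa [hxy] using h.fn_subset hx

theorem eq_of_eq (h : LSubst g x y g') (hy : x = y) : g' = g := by
  induction h with
  | atom => subst hy; congr 1; exact List.map_id'' (fun z ↦ by split_ifs with h <;> simp [h]) _
  | mol _ _ ih₁ ih₂ => rw [ih₁ hy, ih₂ hy]
  | nuNe _ _ _ ih => rw [ih hy]
  | nuCap hyx => exact absurd hy.symm hyx
  | _ => rfl

theorem atom_of_notMem {p : AName} {xs : List ℕ} (hx : x ∉ xs) :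
    LSubst (.atom p xs) x y (.atom p xs) := by
  convert LSubst.atom (p := p) (xs := xs) (x := x) (y := y)
  exact ((List.map_congr_left fun z hz ↦ if_neg (ne_of_mem_of_not_mem hz hx)).trans
    (List.map_id xs)).symm

theorem fuseG_left {z : ℕ} (hz : z ≠ x) : LSubst (fuseG x z) x y (fuseG y z) := by
  unfold fuseG
  convert LSubst.atom (p := .fuse) (xs := [x, z]) (x := x) (y := y)
  simp [hz]

theorem fuseG_right {z : ℕ} (hz : z ≠ x) : LSubst (fuseG z x) x y (fuseG z y) := by
  unfold fuseG
  convert LSubst.atom (p := .fuse) (xs := [z, x]) (x := x) (y := y)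
  simp [hz]

end LSubst

theorem exists_lsubst (g : HLGraph) (x y : ℕ) : ∃ g', LSubst g x y g' := by
  match g with
  | .zero => exact ⟨_, .zero⟩
  | .atom .. => exact ⟨_, .atom⟩
  | .mol g₁ g₂ =>
      obtain ⟨g₁', h₁⟩ := exists_lsubst g₁ x y
      obtain ⟨g₂', h₂⟩ := exists_lsubst g₂ x y
      exact ⟨_, .mol h₁ h₂⟩
  | .nu z h =>
      by_cases hzx : z = x
      · exact hzx ▸ ⟨_, .nuEq⟩
      by_cases hzy : z = y
      · subst hzy
        obtain ⟨w, hw⟩ := Infinite.exists_notMem_finset (insert z h.fn)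
        obtain ⟨h₁, s₁⟩ := exists_lsubst h z w
        have := s₁.size_eq -- for `decreasing_by`
        obtain ⟨h₂, s₂⟩ := exists_lsubst h₁ x z
        exact ⟨_, .nuCap hzx (by grind) (by grind) s₁ s₂⟩
      · obtain ⟨h', s⟩ := exists_lsubst h x y
        exact ⟨_, .nuNe hzx hzy s⟩
termination_by g.size
decreasing_by all_goals simp only [size]; omega

namespace Cong

variable {g g₁ g₂ g₁' g₂' : HLGraph} {x y : ℕ}

instance : Trans Cong Cong Cong := ⟨Cong.trans⟩

theorem nu_of_notMem (h : x ∉ g.fn) : Cong (.nu x g) g :=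
  calc Cong (.nu x g) (.nu x (.mol .zero g)) := .e5 Cong.e1.symm
    Cong _ (.mol (.nu x .zero) g) := .e10 h
    Cong _ (.mol .zero g) := .e4 .e8
    Cong _ g := .e1

theorem mol_congr (h₁ : Cong g₁ g₁') (h₂ : Cong g₂ g₂') : Cong (.mol g₁ g₂) (.mol g₁' g₂') :=
  calc Cong (.mol g₁ g₂) (.mol g₁' g₂) := .e4 h₁
    Cong _ (.mol g₂ g₁') := .e2
    Cong _ (.mol g₂' g₁') := .e4 h₂
    Cong _ (.mol g₁' g₂') := .e2

/-- `a ⋈ b ≡ νz.(z ⋈ a, z ⋈ b)` for fresh `z`, and the right-hand side is symmetric. -/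
theorem fuseG_comm (a b : ℕ) : Cong (fuseG a b) (fuseG b a) := by
  obtain ⟨z, hz⟩ := Infinite.exists_notMem_finset ({a, b} : Finset ℕ)
  have split (u v : ℕ) (hu : z ≠ u) (hv : z ≠ v) :
      Cong (.nu z (.mol (fuseG z u) (fuseG z v))) (fuseG u v) :=
    (Cong.e6 (.inl (by simp [fuseG, fn])) (LSubst.fuseG_left hv.symm)).trans
      (nu_of_notMem (by simp [fuseG, fn, hu, hv]))
  have hza : z ≠ a := by grind
  have hzb : z ≠ b := by grind
  exact (split a b hza hzb).symm.trans (.trans (.e5 .e2) (split b a hzb hza))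

end Cong

/-- `LSubst` is a relation (the new binder in `nuCap` is arbitrary); (E6) identifies its results. -/
theorem LSubst.cong {g g₁ g₂ : HLGraph} {x y : ℕ} (hxy : x ≠ y) (hfn : x ∈ g.fn ∨ y ∈ g.fn)
    (h₁ : LSubst g x y g₁) (h₂ : LSubst g x y g₂) : Cong g₁ g₂ :=
  calc Cong g₁ (.nu x g₁) := (Cong.nu_of_notMem (h₁.notMem_fn hxy)).symm
    Cong _ (.nu x (.mol (fuseG x y) g)) := (Cong.e6 hfn h₁).symm
    Cong _ (.nu x g₂) := .e6 hfn h₂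
    Cong _ g₂ := Cong.nu_of_notMem (h₂.notMem_fn hxy)

/-- Existential, since substitution may have to rename binders of `g`. -/
def SubstCong (g : HLGraph) : Prop :=
  ∀ x y, x ∉ g.fn → x ≠ y → ∃ g', LSubst g x y g' ∧ Cong g g'

section SubstCong

variable {g g' M : HLGraph} {x y z : ℕ}

theorem nu_mol_fuseG_cong (hM : SubstCong M) (hz : z ∉ M.fn) (hy : y ∈ M.fn) :
    Cong (.nu z (.mol (fuseG z y) M)) M := by
  have hzy : z ≠ y := ne_of_mem_of_not_mem hy hz |>.symm
  obtain ⟨M', hs, hc⟩ := hM z y hz hzy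
  exact (Cong.e6 (.inr hy) hs).trans ((Cong.nu_of_notMem (hs.notMem_fn hzy)).trans hc.symm)

theorem nu_nu_mol_fuseG_cong (hM : SubstCong M) (hz : z ∉ M.fn) :
    Cong (.nu y (.nu z (.mol (fuseG z y) M))) (.nu y M) := by
  by_cases hy : y ∈ M.fn
  · exact .e5 (nu_mol_fuseG_cong hM hz hy)
  calc Cong (.nu y (.nu z (.mol (fuseG z y) M))) (.nu y (.mol (.nu z (fuseG z y)) M)) :=
        .e5 (.e10 hz)
    Cong _ (.mol (.nu y (.nu z (fuseG z y))) M) := .e10 hy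
    Cong _ (.mol .zero M) := .e4 (Cong.e9.trans .e7)
    Cong _ M := .e1
    Cong _ (.nu y M) := (Cong.nu_of_notMem hy).symm

theorem nu_cong_nu_of_mem (hg : SubstCong g) (hx : x ∈ g.fn) (hy : y ∉ g.fn)
    (hs : LSubst g x y g') : Cong (.nu x g) (.nu y g') := by
  have hxy : x ≠ y := ne_of_mem_of_not_mem hx hy
  calc Cong (.nu x g) (.nu x (.nu y (.mol (fuseG y x) g))) :=
        .e5 (nu_mol_fuseG_cong hg hy hx).symm
    Cong _ (.nu y (.nu x (.mol (fuseG y x) g))) := .e9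
    Cong _ (.nu y (.nu x (.mol (fuseG x y) g))) := .e5 (.e5 (.e4 (Cong.fuseG_comm y x)))
    Cong _ (.nu y (.nu x g')) := .e5 (.e6 (.inl hx) hs)
    Cong _ (.nu y g') := .e5 (Cong.nu_of_notMem (hs.notMem_fn hxy))

/-- Adjoining `z ⋈ x` for a fresh `z` makes (E6) applicable, which pins `g⟨y/x⟩` down up to `≡`. -/
theorem nu_cong_nu_of_notMem (hg : ∀ M, M.size ≤ g.size → SubstCong M) (hx : x ∉ g.fn)
    (hy : y ∉ g.fn) (hxy : x ≠ y) (hs : LSubst g x y g') : Cong (.nu x g) (.nu y g') := by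
  obtain ⟨g₀, hs₀, hc₀⟩ := hg g le_rfl x y hx hxy
  obtain ⟨z, hz⟩ := Infinite.exists_notMem_finset (insert x (g'.fn ∪ g₀.fn))
  simp only [Finset.mem_insert, Finset.mem_union, not_or] at hz
  obtain ⟨hzx, hz', hz₀⟩ := hz
  have hfuse : LSubst (fuseG z x) x y (fuseG z y) := LSubst.fuseG_right hzx
  have hsame : Cong (.mol (fuseG z y) g₀) (.mol (fuseG z y) g') :=
    LSubst.cong hxy (.inl (by simp [fn, fuseG])) (.mol hfuse hs₀) (.mol hfuse hs)
  calc Cong (.nu x g) g := Cong.nu_of_notMem hx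
    Cong _ (.nu y g) := (Cong.nu_of_notMem hy).symm
    Cong _ (.nu y g₀) := .e5 hc₀
    Cong _ (.nu y (.nu z (.mol (fuseG z y) g₀))) :=
      (nu_nu_mol_fuseG_cong (hg g₀ hs₀.size_eq.le) hz₀).symm
    Cong _ (.nu y (.nu z (.mol (fuseG z y) g'))) := .e5 (.e5 hsame)
    Cong _ (.nu y g') := nu_nu_mol_fuseG_cong (hg g' hs.size_eq.le) hz'

theorem nu_cong_nu (hg : ∀ M, M.size ≤ g.size → SubstCong M) (hy : y ∉ g.fn)
    (hs : LSubst g x y g') : Cong (.nu x g) (.nu y g') := by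
  by_cases hxy : x = y
  · subst hxy
    exact hs.eq_of_eq rfl ▸ .refl
  by_cases hx : x ∈ g.fn
  · exact nu_cong_nu_of_mem (hg g le_rfl) hx hy hs
  · exact nu_cong_nu_of_notMem hg hx hy hxy hs

theorem substCong_zero : SubstCong .zero := fun _ _ _ _ ↦ ⟨_, .zero, .refl⟩

theorem substCong_atom {p : AName} {xs : List ℕ} : SubstCong (.atom p xs) :=
  fun _ _ hx _ ↦ ⟨_, .atom_of_notMem (by simpa [fn] using hx), .refl⟩

theorem SubstCong.mol {g₁ g₂ : HLGraph} (h₁ : SubstCong g₁) (h₂ : SubstCong g₂) :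
    SubstCong (.mol g₁ g₂) := by
  intro x y hx hxy
  simp only [fn, Finset.mem_union, not_or] at hx
  obtain ⟨g₁', hs₁, hc₁⟩ := h₁ x y hx.1 hxy
  obtain ⟨g₂', hs₂, hc₂⟩ := h₂ x y hx.2 hxy
  exact ⟨_, .mol hs₁ hs₂, Cong.mol_congr hc₁ hc₂⟩

theorem substCong_nu {h : HLGraph} (hh : ∀ M, M.size ≤ h.size → SubstCong M) :
    SubstCong (.nu z h) := by
  intro x y hx hxy
  by_cases hzx : z = x
  · exact hzx ▸ ⟨_, .nuEq, .refl⟩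
  have hxh : x ∉ h.fn := fun hxh ↦ hx (Finset.mem_erase.2 ⟨Ne.symm hzx, hxh⟩)
  by_cases hzy : z = y
  · subst hzy
    obtain ⟨w, hw⟩ := Infinite.exists_notMem_finset (insert x (insert z h.fn))
    simp only [Finset.mem_insert, not_or] at hw
    obtain ⟨hwx, hwz, hwh⟩ := hw
    obtain ⟨h₁, hs₁⟩ := exists_lsubst h z w
    have hxh₁ : x ∉ h₁.fn := fun hx₁ ↦ by simpa [Ne.symm hwx, hxh] using hs₁.fn_subset hx₁
    obtain ⟨h₂, hs₂, hc₂⟩ := hh h₁ hs₁.size_eq.le x z hxh₁ hxy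
    exact ⟨_, .nuCap hzx hwh hwz hs₁ hs₂, (nu_cong_nu hh hwh hs₁).trans (.e5 hc₂)⟩
  · obtain ⟨h', hs', hc'⟩ := hh h le_rfl x y hxh hxy
    exact ⟨_, .nuNe hzx hzy hs', .e5 hc'⟩

theorem substCong (g : HLGraph) : SubstCong g :=
  match g with
  | .zero => substCong_zero
  | .atom .. => substCong_atom
  | .mol g₁ g₂ => (substCong g₁).mol (substCong g₂)
  | .nu _ h => substCong_nu fun M _ ↦ substCong M
termination_by g.size
decreasing_by all_goals simp only [size]; omega

end SubstCong

end HLGraph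

/-- α-convertibility of bound links: if `Y ∉ fn(G)` then `νX.G ≡ νY.(G⟨Y/X⟩)`. -/
theorem alpha_conv (g g' : HLGraph) (x y : ℕ) (hy : y ∉ g.fn)
    (hs : HLGraph.LSubst g x y g') : HLGraph.Cong (.nu x g) (.nu y g') :=
  HLGraph.nu_cong_nu (fun M _ ↦ HLGraph.substCong M) hy hs
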